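/- Fix T ≥ 1. There exists a constant C₅′ > 0, depending only on α, the supremum norms of σ and σ′, and T, such that almost surely, for every 0 ≤ ℓ ≤ ⌊NT⌋, ⟨|B_{ℓ,w}^N(·)|², ν_ℓ^N⟩ = (1/N)Σ_{i≤N}|B_{ℓ,w}^N(θ_ℓ^i)|² ≤ C₅′·( Y_ℓ⁶ + |X_ℓ|⁶ + C̄_N⁶ + Ȳ_N⁶ ), where Ȳ_N = (1/N)Σ_{0≤ℓ′<⌊NT⌋}|Y_{ℓ′}| and C̄_N² = (1/N)Σ_{j≤N}(c_0^j)². -/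

import Mathlib

/-!
The bound is deterministic, so it holds for every `ω`. Let `‖c‖` be the root mean square of the
output weights `c^1, …, c^N`. Cauchy–Schwarz gives `|g| ≤ Kσ ‖c‖`, and Minkowski's inequality
applied to the output-weight update gives
`‖c_{k+1}‖ ≤ (1 + |α| Kσ² / N) ‖c_k‖ + |α| Kσ |Y_k| / N`,
so by the discrete Grönwall inequality `‖c_ℓ‖² ≤ A (C̄_N² + Ȳ_N²)` for `ℓ ≤ NT`, with `A`
depending only on `α`, `Kσ` and `T`. Since `(1/N) Σ_i |B_{ℓ,w}(θ_ℓ^i)|²` is at most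
`α² Kσ'² |X_ℓ|² (Y_ℓ - g)² ‖c_ℓ‖²` and `(Y_ℓ - g)² ≤ 2 Y_ℓ² + 2 Kσ² ‖c_ℓ‖²`, the claim reduces
to a degree-six polynomial inequality, which follows from `abc ≤ a³ + b³ + c³`.
-/

open MeasureTheory ProbabilityTheory Filter Finset

noncomputable section

/-- Output `g(x, θ)` of the single-layer perceptron with `N` hidden neurons. -/
def net {d N : ℕ} (σ : ℝ → ℝ) (x : Fin d → ℝ) (cv : Fin N → ℝ) (wv : Fin N → Fin d → ℝ) : ℝ :=
  (N : ℝ)⁻¹ * ∑ i, cv i * σ (∑ m, x m * wv i m)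

/-- The SGD recursion with learning rate `α / N`, activation `σ`, pruning sets `ξ`,
training data `(X_k, Y_k)` and iterates `(c_k^i, w_k^i)`. -/
def IsSGD {Ω : Type} {d N : ℕ} (α : ℝ) (σ : ℝ → ℝ) (ξ : Fin N → Fin d → Bool)
    (X : ℕ → Ω → Fin d → ℝ) (Y : ℕ → Ω → ℝ)
    (c : ℕ → Fin N → Ω → ℝ) (w : ℕ → Fin N → Ω → Fin d → ℝ) : Prop :=
  ∀ k i ω,
    c (k + 1) i ω = c k i ω + (N : ℝ)⁻¹ *
        (α * (Y k ω - net σ (X k ω) (fun j => c k j ω) (fun j => w k j ω)) *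
          σ (∑ m, X k ω m * w k i ω m)) ∧
    ∀ m, w (k + 1) i ω m = w k i ω m + (N : ℝ)⁻¹ *
        (α * (Y k ω - net σ (X k ω) (fun j => c k j ω) (fun j => w k j ω)) * c k i ω *
          deriv σ (∑ m', X k ω m' * w k i ω m') * (if ξ i m then X k ω m else 0))

/-- The training data `{(X_k, Y_k)}_{k ≥ 0}` is an iid sequence. -/
def DataIID {Ω : Type} [MeasurableSpace Ω] {d : ℕ} (P : Measure Ω)
    (X : ℕ → Ω → Fin d → ℝ) (Y : ℕ → Ω → ℝ) : Prop :=
  (∀ k, Measurable fun ω => (X k ω, Y k ω)) ∧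
  iIndepFun (fun k ω => (X k ω, Y k ω)) P ∧
  ∀ k, IdentDistrib (fun ω => (X k ω, Y k ω)) (fun ω => (X 0 ω, Y 0 ω)) P P

section

open Real

def meanSq {N : ℕ} (v : Fin N → ℝ) : ℝ := (N : ℝ)⁻¹ * ∑ i, v i ^ 2

section MeanSquare

variable {N : ℕ}

lemma meanSq_nonneg (v : Fin N → ℝ) : 0 ≤ meanSq v := by
  unfold meanSq; positivity

lemma sqrt_meanSq_eq_norm_div (v : Fin N → ℝ) :
    √(meanSq v) = ‖(WithLp.toLp 2 v : EuclideanSpace ℝ (Fin N))‖ / √N := by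
  rw [EuclideanSpace.norm_eq, meanSq, mul_comm, sqrt_mul' _ (by positivity), sqrt_inv,
    div_eq_mul_inv]
  simp only [Real.norm_eq_abs, sq_abs]

lemma sqrt_meanSq_add_le (u v : Fin N → ℝ) :
    √(meanSq (u + v)) ≤ √(meanSq u) + √(meanSq v) := by
  simp only [sqrt_meanSq_eq_norm_div, WithLp.toLp_add, ← add_div]
  gcongr
  exact norm_add_le _ _

lemma sqrt_meanSq_smul (t : ℝ) (v : Fin N → ℝ) :
    √(meanSq (t • v)) = |t| * √(meanSq v) := by
  simp only [sqrt_meanSq_eq_norm_div, WithLp.toLp_smul, norm_smul, Real.norm_eq_abs, mul_div_assoc]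

lemma meanSq_le_of_abs_le {K : ℝ} {v : Fin N → ℝ} (hv : ∀ i, |v i| ≤ K) :
    meanSq v ≤ K ^ 2 := by
  have hsq : ∀ i, v i ^ 2 ≤ K ^ 2 := fun i => sq_le_sq' (abs_le.1 (hv i)).1 (abs_le.1 (hv i)).2
  calc meanSq v ≤ (N : ℝ)⁻¹ * ∑ _i : Fin N, K ^ 2 :=
        mul_le_mul_of_nonneg_left (sum_le_sum fun i _ => hsq i) (by positivity)
    _ = ((N : ℝ)⁻¹ * N) * K ^ 2 := by rw [sum_const, card_univ, Fintype.card_fin, nsmul_eq_mul]; ring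
    _ ≤ K ^ 2 := mul_le_of_le_one_left (sq_nonneg K) inv_mul_le_one

lemma mean_mul_sq_le_meanSq_mul_meanSq (u v : Fin N → ℝ) :
    ((N : ℝ)⁻¹ * ∑ i, u i * v i) ^ 2 ≤ meanSq u * meanSq v := by
  unfold meanSq
  calc ((N : ℝ)⁻¹ * ∑ i, u i * v i) ^ 2 = (N : ℝ)⁻¹ ^ 2 * (∑ i, u i * v i) ^ 2 := by ring
    _ ≤ (N : ℝ)⁻¹ ^ 2 * ((∑ i, u i ^ 2) * ∑ i, v i ^ 2) := by
        gcongr; exact sum_mul_sq_le_sq_mul_sq _ _ _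
    _ = _ := by ring

end MeanSquare

lemma net_sq_le {d N : ℕ} {σ : ℝ → ℝ} {K : ℝ} (hσ : ∀ s, |σ s| ≤ K) (x : Fin d → ℝ)
    (cv : Fin N → ℝ) (wv : Fin N → Fin d → ℝ) : net σ x cv wv ^ 2 ≤ K ^ 2 * meanSq cv :=
  calc net σ x cv wv ^ 2 ≤ meanSq cv * meanSq (fun i => σ (∑ m, x m * wv i m)) :=
        mean_mul_sq_le_meanSq_mul_meanSq _ _
    _ ≤ meanSq cv * K ^ 2 :=
        mul_le_mul_of_nonneg_left (meanSq_le_of_abs_le fun _ => hσ _) (meanSq_nonneg cv)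
    _ = K ^ 2 * meanSq cv := mul_comm _ _

lemma abs_net_le {d N : ℕ} {σ : ℝ → ℝ} {K : ℝ} (hσ : ∀ s, |σ s| ≤ K) (x : Fin d → ℝ)
    (cv : Fin N → ℝ) (wv : Fin N → Fin d → ℝ) : |net σ x cv wv| ≤ K * √(meanSq cv) := by
  have hK : 0 ≤ K := (abs_nonneg _).trans (hσ 0)
  calc |net σ x cv wv| ≤ √(K ^ 2 * meanSq cv) := abs_le_sqrt (net_sq_le hσ x cv wv)
    _ = K * √(meanSq cv) := by rw [sqrt_mul' _ (meanSq_nonneg cv), sqrt_sq hK]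

namespace IsSGD

variable {Ω : Type} {d N : ℕ} {α K : ℝ} {σ : ℝ → ℝ} {ξ : Fin N → Fin d → Bool}
  {X : ℕ → Ω → Fin d → ℝ} {Y : ℕ → Ω → ℝ} {c : ℕ → Fin N → Ω → ℝ} {w : ℕ → Fin N → Ω → Fin d → ℝ}

lemma sqrt_meanSq_succ_le (h : IsSGD α σ ξ X Y c w) (hσ : ∀ s, |σ s| ≤ K) (k : ℕ) (ω : Ω) :
    √(meanSq fun i => c (k + 1) i ω) ≤
      (1 + |α| * K ^ 2 / N) * √(meanSq fun i => c k i ω) + |α| * K / N * |Y k ω| := by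
  have hK : 0 ≤ K := (abs_nonneg _).trans (hσ 0)
  set r := √(meanSq fun i => c k i ω)
  set e := Y k ω - net σ (X k ω) (fun j => c k j ω) (fun j => w k j ω)
  have hstep : (fun i => c (k + 1) i ω) = (fun i => c k i ω) +
      ((N : ℝ)⁻¹ * (α * e)) • fun i => σ (∑ m, X k ω m * w k i ω m) := by
    funext i; simp only [(h k i ω).1, Pi.add_apply, Pi.smul_apply, smul_eq_mul]; ring
  have he : |e| ≤ |Y k ω| + K * r := (abs_sub _ _).trans (by gcongr; exact abs_net_le hσ _ _ _)
  calc √(meanSq fun i => c (k + 1) i ω)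
      ≤ r + |(N : ℝ)⁻¹ * (α * e)| * √(meanSq fun i => σ (∑ m, X k ω m * w k i ω m)) := by
        rw [hstep, ← sqrt_meanSq_smul]; exact sqrt_meanSq_add_le _ _
    _ ≤ r + (N : ℝ)⁻¹ * (|α| * (|Y k ω| + K * r)) * K := by
        rw [abs_mul, abs_mul, abs_inv, Nat.abs_cast]
        gcongr
        calc √(meanSq fun i => σ (∑ m, X k ω m * w k i ω m)) ≤ √(K ^ 2) :=
              sqrt_le_sqrt (meanSq_le_of_abs_le fun _ => hσ _)
          _ = K := sqrt_sq hK
    _ = (1 + |α| * K ^ 2 / N) * r + |α| * K / N * |Y k ω| := by ring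

lemma sqrt_meanSq_le (h : IsSGD α σ ξ X Y c w) (hσ : ∀ s, |σ s| ≤ K) (ω : Ω) (n : ℕ) :
    √(meanSq fun i => c n i ω) ≤
      (√(meanSq fun i => c 0 i ω) + ∑ k ∈ range n, |α| * K / N * |Y k ω|) *
        exp (∑ _k ∈ range n, |α| * K ^ 2 / N) := by
  have hK : 0 ≤ K := (abs_nonneg _).trans (hσ 0)
  simpa only [range_eq_Ico] using discrete_gronwall (u := fun k => √(meanSq fun i => c k i ω))
    (sqrt_nonneg _) (fun k _ => h.sqrt_meanSq_succ_le hσ k ω) (fun _ _ => by positivity)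
    (fun _ _ => by positivity) (Nat.zero_le n)

lemma meanSq_le (h : IsSGD α σ ξ X Y c w) (hσ : ∀ s, |σ s| ≤ K) (hN : 0 < N) {T : ℝ}
    (hT : 0 ≤ T) (ω : Ω) {n : ℕ} (hn : n ≤ ⌊(N : ℝ) * T⌋₊) :
    meanSq (fun i => c n i ω) ≤ 2 * (1 + (α * K) ^ 2) * exp (|α| * K ^ 2 * T) ^ 2 *
      (meanSq (fun i => c 0 i ω) + ((N : ℝ)⁻¹ * ∑ k ∈ range ⌊(N : ℝ) * T⌋₊, |Y k ω|) ^ 2) := by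
  have hK : 0 ≤ K := (abs_nonneg _).trans (hσ 0)
  have hN' : (0 : ℝ) < N := Nat.cast_pos.2 hN
  set Ybar := (N : ℝ)⁻¹ * ∑ k ∈ range ⌊(N : ℝ) * T⌋₊, |Y k ω|
  have hnT : (n : ℝ) ≤ N * T := (Nat.cast_le.2 hn).trans (Nat.floor_le (by positivity))
  have hsumY : ∑ k ∈ range n, |α| * K / N * |Y k ω| ≤ |α| * K * Ybar := by
    have hsub : ∑ k ∈ range n, |Y k ω| ≤ ∑ k ∈ range ⌊(N : ℝ) * T⌋₊, |Y k ω| :=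
      sum_le_sum_of_subset_of_nonneg (range_subset_range.2 hn) fun _ _ _ => abs_nonneg _
    calc ∑ k ∈ range n, |α| * K / N * |Y k ω| = |α| * K / N * ∑ k ∈ range n, |Y k ω| :=
          (mul_sum _ _ _).symm
      _ ≤ |α| * K / N * ∑ k ∈ range ⌊(N : ℝ) * T⌋₊, |Y k ω| := by gcongr
      _ = |α| * K * Ybar := by ring
  have hexp : ∑ _k ∈ range n, |α| * K ^ 2 / N ≤ |α| * K ^ 2 * T := by
    rw [sum_const, card_range, nsmul_eq_mul, mul_div_assoc', mul_comm, mul_div_assoc]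
    gcongr
    rwa [div_le_iff₀ hN', mul_comm]
  have hrms : √(meanSq fun i => c n i ω) ≤
      (√(meanSq fun i => c 0 i ω) + |α| * K * Ybar) * exp (|α| * K ^ 2 * T) :=
    (h.sqrt_meanSq_le hσ ω n).trans (by gcongr)
  set s := √(meanSq fun i => c 0 i ω)
  have hs : s ^ 2 = meanSq fun i => c 0 i ω := sq_sqrt (meanSq_nonneg _)
  have hb : (|α| * K * Ybar) ^ 2 = (α * K) ^ 2 * Ybar ^ 2 := by
    simp only [mul_pow, sq_abs]
  have hsum_sq : (s + |α| * K * Ybar) ^ 2 ≤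
      (1 + (α * K) ^ 2) * (2 * (meanSq (fun i => c 0 i ω) + Ybar ^ 2)) := by
    nlinarith [sq_nonneg (s - |α| * K * Ybar), sq_nonneg (α * K), sq_nonneg Ybar]
  calc meanSq (fun i => c n i ω) = √(meanSq fun i => c n i ω) ^ 2 :=
        (sq_sqrt (meanSq_nonneg _)).symm
    _ ≤ ((s + |α| * K * Ybar) * exp (|α| * K ^ 2 * T)) ^ 2 := by gcongr
    _ ≤ _ := by
        rw [mul_pow]
        linarith [mul_le_mul_of_nonneg_right hsum_sq (sq_nonneg (exp (|α| * K ^ 2 * T)))]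

end IsSGD

lemma sum_sq_ite_le {ι : Type*} (s : Finset ι) (p : ι → Bool) (x : ι → ℝ) :
    ∑ m ∈ s, (if p m then x m else 0) ^ 2 ≤ ∑ m ∈ s, x m ^ 2 :=
  sum_le_sum fun m _ => by split_ifs <;> simp [sq_nonneg]

lemma mean_sum_sq_mul_ite_le {d N : ℕ} {K' : ℝ} (α e : ℝ) (cv v : Fin N → ℝ)
    (hv : ∀ i, |v i| ≤ K') (ξ : Fin N → Fin d → Bool) (x : Fin d → ℝ) :
    (N : ℝ)⁻¹ * ∑ i, ∑ m, (α * e * cv i * v i * (if ξ i m then x m else 0)) ^ 2 ≤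
      α ^ 2 * e ^ 2 * K' ^ 2 * (∑ m, x m ^ 2) * meanSq cv := by
  have hrow : ∀ i, ∑ m, (α * e * cv i * v i * (if ξ i m then x m else 0)) ^ 2 ≤
      α ^ 2 * e ^ 2 * K' ^ 2 * (∑ m, x m ^ 2) * cv i ^ 2 := by
    intro i
    have hvi : v i ^ 2 ≤ K' ^ 2 := sq_le_sq' (abs_le.1 (hv i)).1 (abs_le.1 (hv i)).2
    calc ∑ m, (α * e * cv i * v i * (if ξ i m then x m else 0)) ^ 2
        = (α * e * cv i) ^ 2 * v i ^ 2 * ∑ m, (if ξ i m then x m else 0) ^ 2 := by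
          simp only [mul_pow, mul_sum]
      _ ≤ (α * e * cv i) ^ 2 * K' ^ 2 * ∑ m, x m ^ 2 := by
          gcongr (α * e * cv i) ^ 2 * ?_ * ?_
          exact sum_sq_ite_le _ _ _
      _ = α ^ 2 * e ^ 2 * K' ^ 2 * (∑ m, x m ^ 2) * cv i ^ 2 := by ring
  calc (N : ℝ)⁻¹ * ∑ i, ∑ m, (α * e * cv i * v i * (if ξ i m then x m else 0)) ^ 2
      ≤ (N : ℝ)⁻¹ * ∑ i, α ^ 2 * e ^ 2 * K' ^ 2 * (∑ m, x m ^ 2) * cv i ^ 2 := by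
        gcongr with i; exact hrow i
    _ = _ := by rw [← mul_sum, meanSq]; ring

lemma mul_mul_le_add_pow_three {a b c : ℝ} (ha : 0 ≤ a) (hb : 0 ≤ b) (hc : 0 ≤ c) :
    a * b * c ≤ a ^ 3 + b ^ 3 + c ^ 3 := by
  nlinarith [sq_nonneg (a - b), sq_nonneg (b - c), sq_nonneg (a - c), mul_nonneg ha hb,
    mul_nonneg hb hc, mul_nonneg ha hc]

lemma mul_sq_add_mul_le {V u q r : ℝ} (hV : 0 ≤ V) (hq : 0 ≤ q) (hr : 0 ≤ r) :
    V * (u ^ 2 + (q + r)) * (q + r) ≤ 6 * (u ^ 6 + V ^ 3 + q ^ 3 + r ^ 3) := by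
  have hu := sq_nonneg u
  have hu6 : 0 ≤ u ^ 6 := by positivity
  linarith [mul_mul_le_add_pow_three hV hu hq, mul_mul_le_add_pow_three hV hu hr,
    mul_mul_le_add_pow_three hV hq hq, mul_mul_le_add_pow_three hV hq hr,
    mul_mul_le_add_pow_three hV hr hr, pow_nonneg hV 3, pow_nonneg hq 3, pow_nonneg hr 3]

lemma sextic_bound_of_sq_le {α e u V K K' A Q q r : ℝ} (hV : 0 ≤ V) (hq : 0 ≤ q) (hr : 0 ≤ r)
    (hA : 0 ≤ A) (hQ : 0 ≤ Q) (he : e ^ 2 ≤ 2 * u ^ 2 + 2 * K ^ 2 * Q) (hQA : Q ≤ A * (q + r)) :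
    α ^ 2 * e ^ 2 * K' ^ 2 * V * Q ≤
      12 * α ^ 2 * K' ^ 2 * A * (1 + K ^ 2 * A) * (u ^ 6 + V ^ 3 + q ^ 3 + r ^ 3) := by
  have he' : e ^ 2 ≤ 2 * (1 + K ^ 2 * A) * (u ^ 2 + (q + r)) := by
    nlinarith [mul_le_mul_of_nonneg_left hQA (sq_nonneg K), mul_nonneg (sq_nonneg K) hA,
      sq_nonneg u, mul_nonneg (mul_nonneg (sq_nonneg K) hA) (sq_nonneg u)]
  calc α ^ 2 * e ^ 2 * K' ^ 2 * V * Q = α ^ 2 * K' ^ 2 * (V * e ^ 2 * Q) := by ring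
    _ ≤ α ^ 2 * K' ^ 2 * (V * (2 * (1 + K ^ 2 * A) * (u ^ 2 + (q + r))) * (A * (q + r))) := by
        gcongr
    _ = 2 * α ^ 2 * K' ^ 2 * A * (1 + K ^ 2 * A) * (V * (u ^ 2 + (q + r)) * (q + r)) := by ring
    _ ≤ 2 * α ^ 2 * K' ^ 2 * A * (1 + K ^ 2 * A) * (6 * (u ^ 6 + V ^ 3 + q ^ 3 + r ^ 3)) := by
        gcongr 2 * α ^ 2 * K' ^ 2 * A * (1 + K ^ 2 * A) * ?_
        exact mul_sq_add_mul_le hV hq hr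
    _ = _ := by ring

lemma sq_sub_net_le {d N : ℕ} {σ : ℝ → ℝ} {K : ℝ} (hσ : ∀ s, |σ s| ≤ K) (y : ℝ)
    (x : Fin d → ℝ) (cv : Fin N → ℝ) (wv : Fin N → Fin d → ℝ) :
    (y - net σ x cv wv) ^ 2 ≤ 2 * y ^ 2 + 2 * K ^ 2 * meanSq cv := by
  nlinarith [net_sq_le hσ x cv wv, sq_nonneg (y + net σ x cv wv)]

end

theorem Bw_squared_bound_general (α Kσ Kσ' T : ℝ) (hT : 1 ≤ T) :
    ∃ C₅' > (0 : ℝ),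
      ∀ (d N : ℕ), 1 ≤ d → 1 ≤ N →
      ∀ σ : ℝ → ℝ, ContDiff ℝ 2 σ → (∀ s, |σ s| ≤ Kσ) → (∀ s, |deriv σ s| ≤ Kσ') →
        (∃ K'', ∀ s, |deriv (deriv σ) s| ≤ K'') →
      ∀ (𝒞 : Finset (Fin d → Bool)) (ξ : Fin N → Fin d → Bool), (∀ i, ξ i ∈ 𝒞) →
      ∀ (Ω : Type) (_ : MeasurableSpace Ω) (P : Measure Ω), IsProbabilityMeasure P →
      ∀ (X : ℕ → Ω → Fin d → ℝ) (Y : ℕ → Ω → ℝ)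
        (c : ℕ → Fin N → Ω → ℝ) (w : ℕ → Fin N → Ω → Fin d → ℝ),
        DataIID P X Y →
        Measurable (fun ω => fun i : Fin N => (c 0 i ω, w 0 i ω)) →
        IndepFun (fun ω => fun i : Fin N => (c 0 i ω, w 0 i ω))
          (fun ω => fun k : ℕ => (X k ω, Y k ω)) P →
        IsSGD α σ ξ X Y c w →
        ∀ᵐ ω ∂P, ∀ ℓ ≤ ⌊(N : ℝ) * T⌋₊,
          (N : ℝ)⁻¹ * ∑ i, ∑ m,
              (α * (Y ℓ ω - net σ (X ℓ ω) (fun j => c ℓ j ω) (fun j => w ℓ j ω)) * c ℓ i ω *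
                deriv σ (∑ m', X ℓ ω m' * w ℓ i ω m') *
                  (if ξ i m then X ℓ ω m else 0)) ^ 2
            ≤ C₅' * ((Y ℓ ω) ^ 6 + (∑ m, (X ℓ ω m) ^ 2) ^ 3
                + ((N : ℝ)⁻¹ * ∑ j, (c 0 j ω) ^ 2) ^ 3
                + ((N : ℝ)⁻¹ * ∑ ℓ' ∈ Finset.range ⌊(N : ℝ) * T⌋₊, |Y ℓ' ω|) ^ 6) := by
  set A := 2 * (1 + (α * Kσ) ^ 2) * Real.exp (|α| * Kσ ^ 2 * T) ^ 2
  refine ⟨12 * α ^ 2 * Kσ' ^ 2 * A * (1 + Kσ ^ 2 * A) + 1, by positivity, ?_⟩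
  intro d N _ hN σ _ hσ hσ' _ 𝒞 ξ _ Ω _ P _ X Y c w _ _ _ hsgd
  refine ae_of_all P fun ω ℓ hℓ => ?_
  have hQ := hsgd.meanSq_le hσ hN (by linarith) ω hℓ
  calc _ ≤ _ := mean_sum_sq_mul_ite_le α _ (fun i => c ℓ i ω) _ (fun _ => hσ' _) ξ (X ℓ ω)
    _ ≤ _ := sextic_bound_of_sq_le (by positivity) (meanSq_nonneg _) (by positivity)
        (by positivity) (meanSq_nonneg _) (sq_sub_net_le hσ _ _ _ _) hQ
    _ ≤ _ := by
        rw [← pow_mul, meanSq]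
        exact mul_le_mul_of_nonneg_right (le_add_of_nonneg_right zero_le_one) (by positivity)

/-- Fix `T ≥ 1`.  There exists a constant `C₅' > 0`, depending only on `α`, the supremum
norms of `σ` and `σ'`, and `T`, such that almost surely, for every `0 ≤ ℓ ≤ ⌊NT⌋`,
`⟨|B_{ℓ,w}^N(·)|², ν_ℓ^N⟩ = (1/N)Σ_i |B_{ℓ,w}^N(θ_ℓ^i)|² ≤ C₅'·(Y_ℓ⁶ + |X_ℓ|⁶ + C̄_N⁶ + Ȳ_N⁶)`,
where `Ȳ_N = (1/N)Σ_{ℓ' < ⌊NT⌋}|Y_{ℓ'}|` and `C̄_N² = (1/N)Σ_j (c_0^j)²`. -/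
theorem Bw_squared_bound (α Kσ Kσ' T : ℝ) (hα : 0 < α) (hT : 1 ≤ T) :
    ∃ C₅' > (0 : ℝ),
      ∀ (d N : ℕ), 1 ≤ d → 1 ≤ N →
      ∀ σ : ℝ → ℝ, ContDiff ℝ 2 σ → (∀ s, |σ s| ≤ Kσ) → (∀ s, |deriv σ s| ≤ Kσ') →
        (∃ K'', ∀ s, |deriv (deriv σ) s| ≤ K'') →
      ∀ (𝒞 : Finset (Fin d → Bool)) (ξ : Fin N → Fin d → Bool), (∀ i, ξ i ∈ 𝒞) →
      ∀ (Ω : Type) (_ : MeasurableSpace Ω) (P : Measure Ω), IsProbabilityMeasure P →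
      ∀ (X : ℕ → Ω → Fin d → ℝ) (Y : ℕ → Ω → ℝ)
        (c : ℕ → Fin N → Ω → ℝ) (w : ℕ → Fin N → Ω → Fin d → ℝ),
        DataIID P X Y →
        Measurable (fun ω => fun i : Fin N => (c 0 i ω, w 0 i ω)) →
        IndepFun (fun ω => fun i : Fin N => (c 0 i ω, w 0 i ω))
          (fun ω => fun k : ℕ => (X k ω, Y k ω)) P →
        IsSGD α σ ξ X Y c w →
        ∀ᵐ ω ∂P, ∀ ℓ ≤ ⌊(N : ℝ) * T⌋₊,
          (N : ℝ)⁻¹ * ∑ i, ∑ m,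
              (α * (Y ℓ ω - net σ (X ℓ ω) (fun j => c ℓ j ω) (fun j => w ℓ j ω)) * c ℓ i ω *
                deriv σ (∑ m', X ℓ ω m' * w ℓ i ω m') *
                  (if ξ i m then X ℓ ω m else 0)) ^ 2
            ≤ C₅' * ((Y ℓ ω) ^ 6 + (∑ m, (X ℓ ω m) ^ 2) ^ 3
                + ((N : ℝ)⁻¹ * ∑ j, (c 0 j ω) ^ 2) ^ 3
                + ((N : ℝ)⁻¹ * ∑ ℓ' ∈ Finset.range ⌊(N : ℝ) * T⌋₊, |Y ℓ' ω|) ^ 6) :=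
  Bw_squared_bound_general α Kσ Kσ' T hT

end
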